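/- For the exponential memory kernel μ(t) = e^{-t}, the asphericity A₂ = 1 - 4 lim_{τ→∞} α(τ)/β(τ) equals 2/3. -/

import Mathlib

open Filter intervalIntegral

/-- Cumulative of the memory kernel: `M(t) = ∫_0^t μ(s) ds`. -/
noncomputable def cumul (μ : ℝ → ℝ) (t : ℝ) : ℝ := ∫ s in (0:ℝ)..t, μ s

/-- The function `α(τ)` from the Asphericity Theorem. -/
noncomputable def alphaFn (μ : ℝ → ℝ) (τ : ℝ) : ℝ :=
  (1/2) * ((∫ s in (0:ℝ)..τ, s * μ s) ^ 2 + (∫ s in (0:ℝ)..τ, cumul μ s) ^ 2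
      - τ ^ 2 * (cumul μ τ) ^ 2)
  + ∫ s in (0:ℝ)..τ, ((4 * s - τ) * cumul μ τ - 2 * s * cumul μ s) * cumul μ s

/-- The function `β(τ)` from the Asphericity Theorem. -/
noncomputable def betaFn (μ : ℝ → ℝ) (τ : ℝ) : ℝ :=
  2 * ((∫ s in (0:ℝ)..τ, s * μ s) ^ 2 + (∫ s in (0:ℝ)..τ, cumul μ s) ^ 2
      + 3 * τ ^ 2 * (cumul μ τ) ^ 2)
  - 4 * ∫ s in (0:ℝ)..τ, ((4 * s + τ) * cumul μ τ - 2 * s * cumul μ s) * cumul μ s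

/-
Expanding the integrands, `α` and `β` are polynomials in `τ`, `M(τ)`, `∫₀^τ s μ`, `∫₀^τ M`,
`∫₀^τ s M` and `∫₀^τ s M²`. For `μ(t) = e^{-t}` all of these are elementary, and the terms
growing like `τ²` and `τ` cancel, leaving `α(τ) = 1/2 + O(τ e^{-τ})` and
`β(τ) = 6 + O(τ² e^{-τ})`. Hence `A₂ → 1 - 4 · (1/2) / 6 = 2/3`.
-/

open Polynomial Real

section Moments

variable {μ : ℝ → ℝ}

theorem continuous_cumul (hμ : ∀ a b, IntervalIntegrable μ MeasureTheory.volume a b) :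
    Continuous (cumul μ) :=
  continuous_primitive hμ 0

theorem integral_affine_mul_cumul_sub (hμ : ∀ a b, IntervalIntegrable μ MeasureTheory.volume a b)
    (τ c : ℝ) :
    ∫ s in (0:ℝ)..τ, ((4 * s + c) * cumul μ τ - 2 * s * cumul μ s) * cumul μ s
      = cumul μ τ * (4 * (∫ s in (0:ℝ)..τ, s * cumul μ s) + c * ∫ s in (0:ℝ)..τ, cumul μ s)
        - 2 * ∫ s in (0:ℝ)..τ, s * cumul μ s ^ 2 := by
  have hM := continuous_cumul hμ
  have hexpand : ∀ s, ((4 * s + c) * cumul μ τ - 2 * s * cumul μ s) * cumul μ s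
      = cumul μ τ * (4 * (s * cumul μ s) + c * cumul μ s) - 2 * (s * cumul μ s ^ 2) :=
    fun s => by ring
  simp only [hexpand]
  rw [integral_sub, integral_const_mul, integral_add, integral_const_mul, integral_const_mul,
    integral_const_mul]
  all_goals exact Continuous.intervalIntegrable (by fun_prop) _ _

end Moments

theorem tendsto_eval_mul_exp_neg_atTop (p : ℝ[X]) :
    Tendsto (fun τ => p.eval τ * exp (-τ)) atTop (nhds 0) := by
  simp only [eval_eq_sum_range, Finset.sum_mul, mul_assoc]
  simpa using tendsto_finsetSum _ fun i _ =>
    (tendsto_pow_mul_exp_neg_atTop_nhds_zero i).const_mul (p.coeff i)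

theorem tendsto_add_eval_mul_exp_neg_add_eval_mul_exp_neg_sq (a : ℝ) (p q : ℝ[X]) :
    Tendsto (fun τ => a + p.eval τ * exp (-τ) + q.eval τ * exp (-τ) ^ 2) atTop (nhds a) := by
  have hq : Tendsto (fun τ => q.eval τ * exp (-τ) * exp (-τ)) atTop (nhds 0) := by
    simpa using (tendsto_eval_mul_exp_neg_atTop q).mul tendsto_exp_neg_atTop_nhds_zero
  simpa [sq, mul_assoc] using
    ((tendsto_eval_mul_exp_neg_atTop p).const_add a).add hq

theorem hasDerivAt_exp_neg (x : ℝ) : HasDerivAt (fun x => exp (-x)) (-exp (-x)) x := by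
  simpa using (hasDerivAt_neg x).exp

theorem cumul_exp_neg (t : ℝ) : cumul (fun t => exp (-t)) t = 1 - exp (-t) := by
  have h (s : ℝ) : HasDerivAt (fun x => -exp (-x)) (exp (-s)) s :=
    (hasDerivAt_exp_neg s).neg.congr_deriv (neg_neg _)
  rw [cumul, integral_eq_sub_of_hasDerivAt (fun s _ => h s)
    (Continuous.intervalIntegrable (by fun_prop) _ _)]
  simp only [neg_zero, exp_zero]; ring

theorem integral_mul_exp_neg (τ : ℝ) :
    ∫ s in (0:ℝ)..τ, s * exp (-s) = 1 - (τ + 1) * exp (-τ) := by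
  have h (s : ℝ) : HasDerivAt (fun x => -((x + 1) * exp (-x))) (s * exp (-s)) s :=
    (((hasDerivAt_id' s).add_const 1).mul (hasDerivAt_exp_neg s)).neg.congr_deriv (by ring)
  rw [integral_eq_sub_of_hasDerivAt (fun s _ => h s)
    (Continuous.intervalIntegrable (by fun_prop) _ _)]
  simp only [neg_zero, exp_zero]; ring

theorem integral_cumul_exp_neg (τ : ℝ) :
    ∫ s in (0:ℝ)..τ, cumul (fun t => exp (-t)) s = τ - 1 + exp (-τ) := by
  have h (s : ℝ) : HasDerivAt (fun x => x + exp (-x)) (1 - exp (-s)) s :=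
    ((hasDerivAt_id' s).add (hasDerivAt_exp_neg s)).congr_deriv (sub_eq_add_neg _ _).symm
  simp only [cumul_exp_neg]
  rw [integral_eq_sub_of_hasDerivAt (fun s _ => h s)
    (Continuous.intervalIntegrable (by fun_prop) _ _)]
  simp only [neg_zero, exp_zero]; ring

theorem integral_mul_cumul_exp_neg (τ : ℝ) :
    ∫ s in (0:ℝ)..τ, s * cumul (fun t => exp (-t)) s = τ ^ 2 / 2 - 1 + (τ + 1) * exp (-τ) := by
  have h (s : ℝ) : HasDerivAt (fun x => x ^ 2 / 2 + (x + 1) * exp (-x)) (s * (1 - exp (-s))) s :=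
    (((hasDerivAt_pow 2 s).div_const 2).add
      (((hasDerivAt_id' s).add_const 1).mul (hasDerivAt_exp_neg s))).congr_deriv (by ring)
  simp only [cumul_exp_neg]
  rw [integral_eq_sub_of_hasDerivAt (fun s _ => h s)
    (Continuous.intervalIntegrable (by fun_prop) _ _)]
  simp only [neg_zero, exp_zero]; ring

theorem integral_mul_cumul_sq_exp_neg (τ : ℝ) :
    ∫ s in (0:ℝ)..τ, s * cumul (fun t => exp (-t)) s ^ 2
      = τ ^ 2 / 2 - 7 / 4 + 2 * (τ + 1) * exp (-τ) - (τ / 2 + 1 / 4) * exp (-τ) ^ 2 := by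
  have h (s : ℝ) : HasDerivAt
      (fun x => x ^ 2 / 2 + 2 * (x + 1) * exp (-x) - (x / 2 + 1 / 4) * exp (-x) ^ 2)
      (s * (1 - exp (-s)) ^ 2) s :=
    ((((hasDerivAt_pow 2 s).div_const 2).add
      ((((hasDerivAt_id' s).add_const 1).const_mul 2).mul (hasDerivAt_exp_neg s))).sub
      ((((hasDerivAt_id' s).div_const 2).add_const (1 / 4)).mul
        ((hasDerivAt_exp_neg s).fun_pow 2))).congr_deriv (by ring)
  simp only [cumul_exp_neg]
  rw [integral_eq_sub_of_hasDerivAt (fun s _ => h s)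
    (Continuous.intervalIntegrable (by fun_prop) _ _)]
  simp only [neg_zero, exp_zero]; ring

theorem intervalIntegrable_exp_neg (a b : ℝ) :
    IntervalIntegrable (fun t => exp (-t)) MeasureTheory.volume a b :=
  Continuous.intervalIntegrable (by fun_prop) a b

theorem alphaFn_exp_neg (τ : ℝ) :
    alphaFn (fun t => exp (-t)) τ
      = 1 / 2 + (2 - 2 * τ) * exp (-τ) - (5 / 2 + τ) * exp (-τ) ^ 2 := by
  have hI := integral_affine_mul_cumul_sub intervalIntegrable_exp_neg τ (-τ)
  simp only [← sub_eq_add_neg] at hI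
  rw [alphaFn, hI, integral_mul_exp_neg, integral_cumul_exp_neg, integral_mul_cumul_exp_neg,
    integral_mul_cumul_sq_exp_neg, cumul_exp_neg]
  ring

theorem betaFn_exp_neg (τ : ℝ) :
    betaFn (fun t => exp (-t)) τ
      = 6 - (24 + 8 * τ) * exp (-τ) + (18 + 20 * τ + 8 * τ ^ 2) * exp (-τ) ^ 2 := by
  rw [betaFn, integral_affine_mul_cumul_sub intervalIntegrable_exp_neg, integral_mul_exp_neg,
    integral_cumul_exp_neg, integral_mul_cumul_exp_neg, integral_mul_cumul_sq_exp_neg,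
    cumul_exp_neg]
  ring

theorem asphericity_exponential_kernel :
    Tendsto (fun τ : ℝ =>
        1 - 4 * (alphaFn (fun t => Real.exp (-t)) τ / betaFn (fun t => Real.exp (-t)) τ))
      atTop (nhds (2 / 3)) := by
  have hα : Tendsto (alphaFn fun t => exp (-t)) atTop (nhds (1 / 2)) := by
    refine (tendsto_add_eval_mul_exp_neg_add_eval_mul_exp_neg_sq (1 / 2) (2 - 2 * X)
      (-C (5 / 2) - X)).congr fun τ => ?_
    rw [alphaFn_exp_neg]
    simp only [eval_sub, eval_neg, eval_mul, eval_ofNat, eval_X, eval_C]; ring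
  have hβ : Tendsto (betaFn fun t => exp (-t)) atTop (nhds 6) := by
    refine (tendsto_add_eval_mul_exp_neg_add_eval_mul_exp_neg_sq 6 (-24 - 8 * X)
      (18 + 20 * X + 8 * X ^ 2)).congr fun τ => ?_
    rw [betaFn_exp_neg]
    simp only [eval_add, eval_sub, eval_neg, eval_mul, eval_pow, eval_ofNat, eval_X]; ring
  convert (hα.div hβ (by norm_num)).const_mul 4 |>.const_sub 1 using 2 <;> norm_num
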